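/- arXiv:2009.09507 — 15 statements merged into one kernel-verified Lean document; each statement's English description precedes it below -/
import Mathlib

section
/- Let R be a commutative ring, S a multiplicatively closed subset of R, M an R-module, and P a submodule of M with (P : M) ∩ S = ∅. Then P is an S-primary submodule of M if and only if there exists s ∈ S such that for every submodule N of M and every r ∈ R with r • N ⊆ P, either s * r ∈ √(P : M) or s • N ⊆ P. -/
/-- `P` is an `S`-primary submodule of `M`. -/
def IsSPrimary {R M : Type*} [CommRing R] [AddCommGroup M] [Module R M]
    (S : Set R) (P : Submodule R M) : Prop :=
  (∀ s ∈ S, s ∉ P.colon ⊤) ∧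
  ∃ s ∈ S, ∀ (r : R) (m : M), r • m ∈ P → s * r ∈ (P.colon ⊤).radical ∨ s • m ∈ P

namespace Submodule

variable {R M : Type*} [CommRing R] [AddCommGroup M] [Module R M]

theorem smul_mem_of_mem_span_singleton {P : Submodule R M} {r : R} {m n : M}
    (hrm : r • m ∈ P) (hn : n ∈ span R {m}) : r • n ∈ P := by
  obtain ⟨c, rfl⟩ := mem_span_singleton.mp hn
  rw [smul_comm]
  exact P.smul_mem c hrm

theorem forall_smul_mem_or_iff_forall_submodule (P : Submodule R M) (I : Ideal R) (s : R) :
    (∀ (r : R) (m : M), r • m ∈ P → s * r ∈ I ∨ s • m ∈ P) ↔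
      ∀ (N : Submodule R M) (r : R),
        (∀ n ∈ N, r • n ∈ P) → s * r ∈ I ∨ ∀ n ∈ N, s • n ∈ P := by
  constructor
  · intro h N r hN
    by_cases hr : s * r ∈ I
    · exact Or.inl hr
    · exact Or.inr fun n hn => (h r n (hN n hn)).resolve_left hr
  · intro h r m hrm
    exact (h (span R {m}) r fun n hn => smul_mem_of_mem_span_singleton hrm hn).imp id
      fun hs => hs m (mem_span_singleton_self m)

end Submodule

theorem stmt0_general {R M : Type*} [CommRing R] [AddCommGroup M] [Module R M]
    (S : Set R)
    (P : Submodule R M) (hdisj : ∀ s ∈ S, s ∉ P.colon ⊤) :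
    IsSPrimary S P ↔
      ∃ s ∈ S, ∀ (N : Submodule R M) (r : R),
        (∀ n ∈ N, r • n ∈ P) → s * r ∈ (P.colon ⊤).radical ∨ ∀ n ∈ N, s • n ∈ P := by
  simp only [IsSPrimary, and_iff_right hdisj, Submodule.forall_smul_mem_or_iff_forall_submodule]

theorem stmt0 {R M : Type*} [CommRing R] [AddCommGroup M] [Module R M]
    (S : Set R) (hS0 : (0 : R) ∉ S) (hS1 : (1 : R) ∈ S)
    (hSmul : ∀ a ∈ S, ∀ b ∈ S, a * b ∈ S)
    (P : Submodule R M) (hdisj : ∀ s ∈ S, s ∉ P.colon ⊤) :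
    IsSPrimary S P ↔
      ∃ s ∈ S, ∀ (N : Submodule R M) (r : R),
        (∀ n ∈ N, r • n ∈ P) → s * r ∈ (P.colon ⊤).radical ∨ ∀ n ∈ N, s • n ∈ P :=
  stmt0_general S P hdisj
end

section
/- Let R be a commutative ring, S a multiplicatively closed subset of R, M an R-module, and P a submodule of M with (P : M) ∩ S = ∅. Then P is an S-primary submodule of M if and only if there exists s ∈ S such that for every ideal J of R and every submodule N of M with J • N ⊆ P, either s • J ⊆ √(P : M) or s • N ⊆ P. -/
section

variable {R M : Type*} [CommSemiring R] [AddCommMonoid M] [Module R M]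

theorem Submodule.span_singleton_smul_span_singleton_le_iff {P : Submodule R M} {r : R} {m : M} :
    Ideal.span {r} • span R {m} ≤ P ↔ r • m ∈ P := by
  rw [span_smul_span, Set.singleton_smul_singleton, span_singleton_le_iff_mem]

theorem Submodule.forall_ideal_smul_le_imp_iff (P : Submodule R M) (I : Ideal R) (s : R) :
    (∀ (J : Ideal R) (N : Submodule R M),
        J • N ≤ P → (∀ a ∈ J, s * a ∈ I) ∨ ∀ n ∈ N, s • n ∈ P) ↔
      ∀ (r : R) (m : M), r • m ∈ P → s * r ∈ I ∨ s • m ∈ P := by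
  refine ⟨fun h r m hrm => ?_, fun h J N hJN => ?_⟩
  · exact (h _ _ (span_singleton_smul_span_singleton_le_iff.mpr hrm)).imp
      (· r (Ideal.mem_span_singleton_self r)) (· m (mem_span_singleton_self m))
  · refine or_iff_not_imp_left.mpr fun hJ n hn => ?_
    obtain ⟨a, haJ, ha⟩ := not_forall₂.mp hJ
    exact (h a n (hJN (smul_mem_smul haJ hn))).resolve_left ha

end

theorem stmt1_general {R M : Type*} [CommRing R] [AddCommGroup M] [Module R M]
    (S : Set R)
    (P : Submodule R M) (hdisj : ∀ s ∈ S, s ∉ P.colon ⊤) :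
    IsSPrimary S P ↔
      ∃ s ∈ S, ∀ (J : Ideal R) (N : Submodule R M),
        J • N ≤ P → (∀ a ∈ J, s * a ∈ (P.colon ⊤).radical) ∨ ∀ n ∈ N, s • n ∈ P := by
  rw [IsSPrimary, and_iff_right hdisj]
  simp_rw [Submodule.forall_ideal_smul_le_imp_iff]

theorem stmt1 {R M : Type*} [CommRing R] [AddCommGroup M] [Module R M]
    (S : Set R) (hS0 : (0 : R) ∉ S) (hS1 : (1 : R) ∈ S)
    (hSmul : ∀ a ∈ S, ∀ b ∈ S, a * b ∈ S)
    (P : Submodule R M) (hdisj : ∀ s ∈ S, s ∉ P.colon ⊤) :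
    IsSPrimary S P ↔
      ∃ s ∈ S, ∀ (J : Ideal R) (N : Submodule R M),
        J • N ≤ P → (∀ a ∈ J, s * a ∈ (P.colon ⊤).radical) ∨ ∀ n ∈ N, s • n ∈ P :=
  stmt1_general S P hdisj
end

section
/- Consider the ℤ-module M = ℤ/4ℤ, the multiplicative set S = ℤ \ 2ℤ, and the submodule P = 0. Then P is an S-primary submodule of M but P is not an S-prime submodule of M. -/
namespace ZMod

theorem mem_bot_colon_top_iff (n : ℕ) (x : ℤ) :
    x ∈ (⊥ : Submodule ℤ (ZMod n)).colon ⊤ ↔ (n : ℤ) ∣ x := by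
  rw [Submodule.mem_colon, ← intCast_zmod_eq_zero_iff_dvd]
  refine ⟨fun h ↦ by simpa using h 1 trivial, fun h m _ ↦ by simp [zsmul_eq_mul, h]⟩

theorem mem_radical_bot_colon_top_of_dvd (p k : ℕ) {x : ℤ} (h : (p : ℤ) ∣ x) :
    x ∈ ((⊥ : Submodule ℤ (ZMod (p ^ k))).colon ⊤).radical :=
  ⟨k, (mem_bot_colon_top_iff _ _).mpr (by simpa using pow_dvd_pow_of_dvd h k)⟩

theorem zsmul_eq_zero_iff_of_isCoprime {n : ℕ} {r : ℤ} (h : IsCoprime (n : ℤ) r) (m : ZMod n) :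
    r • m = 0 ↔ m = 0 := by
  rw [zsmul_eq_mul, ((coe_int_isUnit_iff_isCoprime r n).mpr h).mul_right_eq_zero]

end ZMod

theorem Int.isCoprime_two_pow_left_of_not_dvd {r : ℤ} (hr : ¬ 2 ∣ r) (k : ℕ) :
    IsCoprime ((2 ^ k : ℕ) : ℤ) r := by
  push_cast
  exact (Int.isCoprime_two_left.mpr (Int.odd_iff.mpr (by omega))).pow_left

theorem stmt4 :
    IsSPrimary {n : ℤ | ¬ (2 ∣ n)} (⊥ : Submodule ℤ (ZMod 4)) ∧
    ¬ ((∀ s ∈ {n : ℤ | ¬ (2 ∣ n)}, s ∉ (⊥ : Submodule ℤ (ZMod 4)).colon ⊤) ∧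
        ∃ s ∈ {n : ℤ | ¬ (2 ∣ n)}, ∀ (r : ℤ) (m : ZMod 4),
          r • m ∈ (⊥ : Submodule ℤ (ZMod 4)) →
            s * r ∈ (⊥ : Submodule ℤ (ZMod 4)).colon ⊤ ∨ s • m ∈ (⊥ : Submodule ℤ (ZMod 4))) := by
  refine ⟨⟨fun s hs hs4 ↦ ?_, 1, by decide, fun r m hrm ↦ ?_⟩, ?_⟩
  · have h4 := (ZMod.mem_bot_colon_top_iff 4 s).mp hs4
    exact hs (by omega)
  · by_cases hr : 2 ∣ r
    · rw [one_mul]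
      exact .inl (ZMod.mem_radical_bot_colon_top_of_dvd 2 2 hr)
    · rw [Submodule.mem_bot, ZMod.zsmul_eq_zero_iff_of_isCoprime
        (Int.isCoprime_two_pow_left_of_not_dvd hr 2)] at hrm
      simp [hrm]
  · rintro ⟨-, s, hs, h⟩
    rcases h 2 2 ((Submodule.mem_bot ℤ).mpr (by decide)) with h4 | h2
    · rw [ZMod.mem_bot_colon_top_iff] at h4
      exact hs (by omega)
    · rw [Submodule.mem_bot, ZMod.zsmul_eq_zero_iff_of_isCoprime
        (Int.isCoprime_two_pow_left_of_not_dvd hs 2)] at h2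
      exact absurd h2 (by decide)
end

section
/- Let S be a multiplicatively closed subset of R with saturation S* = {x ∈ R | x/1 is a unit of S⁻¹R}, and let P be a submodule of an R-module M. Then P is an S-primary submodule of M if and only if P is an S*-primary submodule of M. -/
section

variable {R M : Type*} [CommRing R] [AddCommGroup M] [Module R M] {P : Submodule R M}

lemma primary_condition_of_dvd {s s' : R} (hss' : s ∣ s')
    (hs : ∀ (r : R) (m : M), r • m ∈ P → s * r ∈ (P.colon ⊤).radical ∨ s • m ∈ P) :
    ∀ (r : R) (m : M), r • m ∈ P → s' * r ∈ (P.colon ⊤).radical ∨ s' • m ∈ P := by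
  obtain ⟨c, rfl⟩ := hss'
  intro r m hrm
  rcases hs r m hrm with hr | hm
  · left
    rw [mul_right_comm]
    exact Ideal.mul_mem_right c _ hr
  · right
    rw [mul_comm, mul_smul]
    exact P.smul_mem c hm

lemma isSPrimary_iff_of_subset_of_forall_dvd {S T : Set R} (hST : S ⊆ T)
    (hTS : ∀ t ∈ T, ∃ s ∈ S, t ∣ s) :
    IsSPrimary S P ↔ IsSPrimary T P := by
  constructor
  · rintro ⟨hdisj, s, hs, hprim⟩
    refine ⟨fun t ht htP => ?_, s, hST hs, hprim⟩
    obtain ⟨s', hs', hts'⟩ := hTS t ht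
    exact hdisj s' hs' (Ideal.mem_of_dvd _ hts' htP)
  · rintro ⟨hdisj, t, ht, hprim⟩
    obtain ⟨s, hs, hts⟩ := hTS t ht
    exact ⟨fun s hs => hdisj s (hST hs), s, hs, primary_condition_of_dvd hts hprim⟩

end

theorem stmt6_general {R M : Type*} [CommRing R] [AddCommGroup M] [Module R M]
    (S : Submonoid R) (P : Submodule R M) :
    IsSPrimary (S : Set R) P ↔
      IsSPrimary {x : R | IsUnit (algebraMap R (Localization S) x)} P :=
  isSPrimary_iff_of_subset_of_forall_dvd
    (fun s hs => IsLocalization.map_units (Localization S) ⟨s, hs⟩)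
    (fun _ ht => (IsLocalization.algebraMap_isUnit_iff S).1 ht)

theorem stmt6 {R M : Type*} [CommRing R] [AddCommGroup M] [Module R M]
    (S : Submonoid R) (hS0 : (0 : R) ∉ S) (P : Submodule R M) :
    IsSPrimary (S : Set R) P ↔
      IsSPrimary {x : R | IsUnit (algebraMap R (Localization S) x)} P :=
  stmt6_general S P
end

section
/- Let P be an S-primary submodule of an R-module M. Then the localization S⁻¹P is a primary submodule of the S⁻¹R-module S⁻¹M. -/
/-- `Q` is a primary submodule of the `A`-module `N`. -/
def IsPrimarySub {A N : Type*} [CommRing A] [AddCommGroup N] [Module A N]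
    (Q : Submodule A N) : Prop :=
  Q ≠ ⊤ ∧ ∀ (r : A) (n : N), r • n ∈ Q → n ∈ Q ∨ r ∈ (Q.colon ⊤).radical

theorem Ideal.notMem_radical_of_forall_notMem {R : Type*} [CommSemiring R] {S : Submonoid R}
    {I : Ideal R} (hS : ∀ s ∈ S, s ∉ I) {s : R} (hs : s ∈ S) : s ∉ I.radical :=
  fun ⟨n, hn⟩ ↦ hS (s ^ n) (pow_mem hs n) hn

namespace Submodule

variable {R A M N : Type*} [CommSemiring R] [CommSemiring A] [Algebra R A]
  [AddCommMonoid M] [Module R M] [AddCommMonoid N] [Module R N] [Module A N]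
  [IsScalarTower R A N] {S : Submonoid R} [IsLocalization S A]
  {f : M →ₗ[R] N} [IsLocalizedModule S f] {P : Submodule R M}

theorem mk'_mem_localized'_iff {m : M} {t : S} :
    IsLocalizedModule.mk' f m t ∈ P.localized' A S f ↔ ∃ u : S, u • m ∈ P := by
  constructor
  · rintro ⟨p, hp, v, hpv⟩
    obtain ⟨u, hu⟩ := (IsLocalizedModule.mk'_eq_mk'_iff f p m v t).mp hpv
    refine ⟨u * v, ?_⟩
    rw [mul_smul, hu, smul_smul]
    exact P.smul_of_tower_mem _ hp
  · rintro ⟨u, hu⟩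
    exact ⟨u • m, hu, u * t, IsLocalizedModule.mk'_cancel_left f m u t⟩

theorem colon_top_le_comap_colon_top_localized' :
    P.colon ⊤ ≤ ((P.localized' A S f).colon ⊤).comap (algebraMap R A) := by
  intro a ha
  rw [Ideal.mem_comap, mem_colon]
  rintro x -
  obtain ⟨⟨m, t⟩, rfl⟩ := IsLocalizedModule.mk'_surjective S f x
  rw [Function.uncurry_apply_pair, algebraMap_smul, ← IsLocalizedModule.mk'_smul]
  exact ⟨a • m, mem_colon.mp ha m trivial, t, rfl⟩

theorem radical_colon_top_le_comap_radical_colon_top_localized' :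
    (P.colon ⊤).radical ≤ ((P.localized' A S f).colon ⊤).radical.comap (algebraMap R A) := by
  rw [Ideal.comap_radical]
  exact Ideal.radical_mono colon_top_le_comap_colon_top_localized'

end Submodule

namespace IsSPrimary

open Submodule

variable {R A M N : Type*} [CommRing R] [CommRing A] [Algebra R A]
  [AddCommGroup M] [Module R M] [AddCommGroup N] [Module R N] [Module A N]
  [IsScalarTower R A N] {S : Submonoid R} [IsLocalization S A]
  {f : M →ₗ[R] N} [IsLocalizedModule S f] {P : Submodule R M}

theorem localized'_ne_top (hP : IsSPrimary (S : Set R) P) : P.localized' A S f ≠ ⊤ := by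
  obtain ⟨hdisj, s₀, hs₀, hprim⟩ := hP
  intro htop
  refine hdisj s₀ hs₀ (mem_colon.mpr fun m _ ↦ ?_)
  have hm : IsLocalizedModule.mk' f m (1 : S) ∈ P.localized' A S f := htop ▸ trivial
  obtain ⟨u, hu⟩ := mk'_mem_localized'_iff.mp hm
  exact (hprim u m hu).resolve_left
    (Ideal.notMem_radical_of_forall_notMem hdisj (mul_mem hs₀ u.2))

theorem mem_or_mem_radical_of_smul_mem_localized' (hP : IsSPrimary (S : Set R) P) {r : A} {n : N}
    (h : r • n ∈ P.localized' A S f) :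
    n ∈ P.localized' A S f ∨ r ∈ ((P.localized' A S f).colon ⊤).radical := by
  obtain ⟨-, s₀, hs₀, hprim⟩ := hP
  obtain ⟨⟨r₀, u⟩, rfl⟩ := IsLocalization.mk'_surjective S r
  obtain ⟨⟨m, t⟩, rfl⟩ := IsLocalizedModule.mk'_surjective S f n
  rw [Function.uncurry_apply_pair, IsLocalizedModule.mk'_smul_mk', mk'_mem_localized'_iff] at h
  obtain ⟨w, hw⟩ := h
  rw [← smul_assoc, Submonoid.smul_def, smul_eq_mul] at hw
  rcases hprim _ m hw with hrad | hs₀m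
  · right
    have hunit : IsUnit (algebraMap R A (s₀ * w)) :=
      IsLocalization.map_units A (⟨s₀, hs₀⟩ * w : S)
    have hmap :=
      radical_colon_top_le_comap_radical_colon_top_localized' (A := A) (S := S) (f := f) hrad
    rwa [Ideal.mem_comap, ← mul_assoc, map_mul, Ideal.unit_mul_mem_iff_mem _ hunit,
      ← IsLocalization.mk'_mem_iff (y := u)] at hmap
  · exact .inl (mk'_mem_localized'_iff.mpr ⟨⟨s₀, hs₀⟩, hs₀m⟩)

theorem isPrimarySub_localized' (hP : IsSPrimary (S : Set R) P) :
    IsPrimarySub (P.localized' A S f) :=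
  ⟨hP.localized'_ne_top, fun _ _ ↦ hP.mem_or_mem_radical_of_smul_mem_localized'⟩

end IsSPrimary

theorem stmt7_general {R M : Type*} [CommRing R] [AddCommGroup M] [Module R M]
    (S : Submonoid R) (P : Submodule R M)
    (hP : IsSPrimary (S : Set R) P) :
    IsPrimarySub (Submodule.localized S P) :=
  hP.isPrimarySub_localized'

theorem stmt7 {R M : Type*} [CommRing R] [AddCommGroup M] [Module R M]
    (S : Submonoid R) (hS0 : (0 : R) ∉ S) (P : Submodule R M)
    (hP : IsSPrimary (S : Set R) P) :
    IsPrimarySub (Submodule.localized S P) :=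
  stmt7_general S P hP
end

section
/- Let f : M → M' be an R-module homomorphism and P' an S-primary submodule of M' with (f⁻¹(P') : M) ∩ S = ∅. Then f⁻¹(P') is an S-primary submodule of M. -/
theorem Submodule.colon_image_le_comap_colon {R M M' : Type*} [Semiring R] [AddCommMonoid M]
    [Module R M] [AddCommMonoid M'] [Module R M'] (f : M →ₗ[R] M') (N : Submodule R M')
    (S : Set M) : N.colon (f '' S) ≤ (N.comap f).colon S := fun r hr =>
  Submodule.mem_colon.mpr fun m hm => by
    simpa using Submodule.mem_colon.mp hr (f m) ⟨m, hm, rfl⟩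

theorem Submodule.colon_univ_le_comap_colon_univ {R M M' : Type*} [Semiring R]
    [AddCommMonoid M] [Module R M] [AddCommMonoid M'] [Module R M'] (f : M →ₗ[R] M')
    (N : Submodule R M') : N.colon Set.univ ≤ (N.comap f).colon Set.univ :=
  (Submodule.colon_mono le_rfl (Set.subset_univ _)).trans (N.colon_image_le_comap_colon f _)

theorem IsSPrimary.comap {R M M' : Type*} [CommRing R] [AddCommGroup M] [Module R M]
    [AddCommGroup M'] [Module R M'] {S : Set R} {P' : Submodule R M'} (hP' : IsSPrimary S P')
    (f : M →ₗ[R] M') (hdisj : ∀ s ∈ S, s ∉ (P'.comap f).colon ⊤) :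
    IsSPrimary S (P'.comap f) := by
  obtain ⟨s, hsS, hs⟩ := hP'.2
  refine ⟨hdisj, s, hsS, fun r m hrm => ?_⟩
  rw [Submodule.mem_comap, map_smul] at hrm
  rcases hs r (f m) hrm with hrad | hsm
  · exact .inl (Ideal.radical_mono (P'.colon_univ_le_comap_colon_univ f) hrad)
  · exact .inr (by rwa [Submodule.mem_comap, map_smul])

theorem stmt9_general {R M M' : Type*} [CommRing R] [AddCommGroup M] [Module R M]
    [AddCommGroup M'] [Module R M'] (f : M →ₗ[R] M')
    (S : Set R)
    (P' : Submodule R M') (hP' : IsSPrimary S P')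
    (hdisj : ∀ s ∈ S, s ∉ (P'.comap f).colon ⊤) :
    IsSPrimary S (P'.comap f) :=
  hP'.comap f hdisj

theorem stmt9 {R M M' : Type*} [CommRing R] [AddCommGroup M] [Module R M]
    [AddCommGroup M'] [Module R M'] (f : M →ₗ[R] M')
    (S : Set R) (hS0 : (0 : R) ∉ S) (hS1 : (1 : R) ∈ S)
    (hSmul : ∀ a ∈ S, ∀ b ∈ S, a * b ∈ S)
    (P' : Submodule R M') (hP' : IsSPrimary S P')
    (hdisj : ∀ s ∈ S, s ∉ (P'.comap f).colon ⊤) :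
    IsSPrimary S (P'.comap f) :=
  stmt9_general f S P' hP' hdisj
end

section
/- Let f : M → M' be a surjective R-module homomorphism and P an S-primary submodule of M with ker(f) ⊆ P. Then f(P) is an S-primary submodule of M'. -/
namespace Submodule

variable {R M M' : Type*}

section Semiring

variable [Semiring R] [AddCommMonoid M] [Module R M] [AddCommMonoid M'] [Module R M']

theorem colon_comap (f : M →ₗ[R] M') (Q : Submodule R M') (T : Set M) :
    (Q.comap f).colon T = Q.colon (f '' T) := by
  ext r
  simp only [mem_colon, mem_comap, Set.forall_mem_image, map_smul]

end Semiring

variable [Ring R] [AddCommGroup M] [Module R M] [AddCommGroup M'] [Module R M']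
  {f : M →ₗ[R] M'} {P : Submodule R M}

theorem apply_mem_map_iff_of_ker_le (hker : LinearMap.ker f ≤ P) {m : M} :
    f m ∈ P.map f ↔ m ∈ P := by
  rw [← mem_comap, comap_map_eq_self hker]

theorem colon_map_of_ker_le (hf : Function.Surjective f) (hker : LinearMap.ker f ≤ P) :
    (P.map f).colon Set.univ = P.colon Set.univ := by
  conv_rhs => rw [← comap_map_eq_self hker]
  rw [colon_comap, Set.image_univ_of_surjective hf]

end Submodule

open Submodule in
theorem IsSPrimary.map {R M M' : Type*} [CommRing R] [AddCommGroup M] [Module R M]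
    [AddCommGroup M'] [Module R M'] {S : Set R} {P : Submodule R M} (hP : IsSPrimary S P)
    {f : M →ₗ[R] M'} (hf : Function.Surjective f) (hker : LinearMap.ker f ≤ P) :
    IsSPrimary S (P.map f) := by
  obtain ⟨hdisj, s, hsS, hs⟩ := hP
  have hmem {r : R} {m : M} : r • f m ∈ P.map f ↔ r • m ∈ P := by
    rw [← map_smul, apply_mem_map_iff_of_ker_le hker]
  have hcolon : (P.map f).colon ⊤ = P.colon ⊤ := colon_map_of_ker_le hf hker
  refine ⟨hcolon ▸ hdisj, s, hsS, fun r m' hrm ↦ ?_⟩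
  obtain ⟨m, rfl⟩ := hf m'
  rw [hcolon, hmem]
  exact hs r m (hmem.mp hrm)

theorem stmt10_general {R M M' : Type*} [CommRing R] [AddCommGroup M] [Module R M]
    [AddCommGroup M'] [Module R M'] (f : M →ₗ[R] M') (hf : Function.Surjective f)
    (S : Set R)
    (P : Submodule R M) (hP : IsSPrimary S P) (hker : LinearMap.ker f ≤ P) :
    IsSPrimary S (P.map f) :=
  hP.map hf hker

theorem stmt10 {R M M' : Type*} [CommRing R] [AddCommGroup M] [Module R M]
    [AddCommGroup M'] [Module R M'] (f : M →ₗ[R] M') (hf : Function.Surjective f)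
    (S : Set R) (hS0 : (0 : R) ∉ S) (hS1 : (1 : R) ∈ S)
    (hSmul : ∀ a ∈ S, ∀ b ∈ S, a * b ∈ S)
    (P : Submodule R M) (hP : IsSPrimary S P) (hker : LinearMap.ker f ≤ P) :
    IsSPrimary S (P.map f) :=
  stmt10_general f hf S P hP hker
end

section
/- Let L ⊆ P be submodules of an R-module M and S a multiplicatively closed subset of R. Then P is an S-primary submodule of M if and only if P/L is an S-primary submodule of M/L. -/
section Comap

variable {R M N : Type*} [CommRing R] [AddCommGroup M] [Module R M] [AddCommGroup N] [Module R N]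
  {f : M →ₗ[R] N}

theorem Submodule.colon_top_comap_of_surjective (hf : Function.Surjective f)
    (Q : Submodule R N) : (Q.comap f).colon ⊤ = Q.colon ⊤ := by
  ext r
  simp only [Submodule.mem_colon, Set.top_eq_univ, Set.mem_univ, true_imp_iff,
    Submodule.mem_comap, map_smul, hf.forall]

theorem isSPrimary_comap_iff (hf : Function.Surjective f) (S : Set R) (Q : Submodule R N) :
    IsSPrimary S (Q.comap f) ↔ IsSPrimary S Q := by
  simp only [IsSPrimary, Submodule.colon_top_comap_of_surjective hf, Submodule.mem_comap,
    map_smul, hf.forall]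

end Comap

theorem stmt11_general {R M : Type*} [CommRing R] [AddCommGroup M] [Module R M]
    (S : Set R)
    (L P : Submodule R M) (hLP : L ≤ P) :
    IsSPrimary S P ↔ IsSPrimary S (P.map L.mkQ) := by
  have hP : (P.map L.mkQ).comap L.mkQ = P := by
    rw [Submodule.comap_map_mkQ, sup_of_le_right hLP]
  rw [← isSPrimary_comap_iff L.mkQ_surjective, hP]

theorem stmt11 {R M : Type*} [CommRing R] [AddCommGroup M] [Module R M]
    (S : Set R) (hS0 : (0 : R) ∉ S) (hS1 : (1 : R) ∈ S)
    (hSmul : ∀ a ∈ S, ∀ b ∈ S, a * b ∈ S)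
    (L P : Submodule R M) (hLP : L ≤ P) :
    IsSPrimary S P ↔ IsSPrimary S (P.map L.mkQ) :=
  stmt11_general S L P hLP
end

section
/- Let P be an S-primary submodule of an R-module M. Then the ideal (P : M) is an S-primary ideal of R. -/
/-- `I` is an `S`-primary ideal of `A`. -/
def IsSPrimaryIdeal {A : Type*} [CommRing A] (S : Set A) (I : Ideal A) : Prop :=
  (∀ s ∈ S, s ∉ I) ∧
  ∃ s ∈ S, ∀ x y : A, x * y ∈ I → s * x ∈ I.radical ∨ s * y ∈ I

theorem Submodule.mem_or_mul_mem_colon_top {R M : Type*} [CommRing R] [AddCommGroup M]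
    [Module R M] {P : Submodule R M} {J : Ideal R} {s : R}
    (h : ∀ (r : R) (m : M), r • m ∈ P → s * r ∈ J ∨ s • m ∈ P)
    {x y : R} (hxy : x * y ∈ P.colon ⊤) : s * x ∈ J ∨ s * y ∈ P.colon ⊤ := by
  refine or_iff_not_imp_left.mpr fun hx => Submodule.mem_colon.mpr fun m _ => ?_
  have hxym : x • y • m ∈ P := by
    rw [smul_smul]
    exact Submodule.mem_colon.mp hxy m trivial
  simpa only [smul_smul] using (h x (y • m) hxym).resolve_left hx

theorem stmt12_general {R M : Type*} [CommRing R] [AddCommGroup M] [Module R M]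
    (S : Set R) (P : Submodule R M) (hP : IsSPrimary S P) :
    IsSPrimaryIdeal S (P.colon ⊤) := by
  obtain ⟨hS_disjoint, s, hs, h⟩ := hP
  exact ⟨hS_disjoint, s, hs, fun _ _ => Submodule.mem_or_mul_mem_colon_top h⟩

theorem stmt12 {R M : Type*} [CommRing R] [AddCommGroup M] [Module R M]
    (S : Set R) (hS0 : (0 : R) ∉ S) (hS1 : (1 : R) ∈ S)
    (hSmul : ∀ a ∈ S, ∀ b ∈ S, a * b ∈ S)
    (P : Submodule R M) (hP : IsSPrimary S P) :
    IsSPrimaryIdeal S (P.colon ⊤) :=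
  stmt12_general S P hP
end

section
/- Let M be a multiplication R-module and P a submodule of M such that (P : M) is an S-primary ideal of R. Then P is an S-primary submodule of M. -/
/-! Write `R m = J M`. If `r m ∈ P`, then `r J ⊆ (P : M)`, so for the witness `s` of `(P : M)`
either `s r ∈ √(P : M)` or `s J ⊆ (P : M)`, and in the latter case `s m ∈ s J M ⊆ P`. -/

namespace Submodule

variable {R M : Type*} [CommRing R] [AddCommGroup M] [Module R M]

theorem mul_mem_colon_top_of_smul_mem {J : Ideal R} {P : Submodule R M} {r a : R} {m : M}
    (hm : span R {m} = J • ⊤) (hrm : r • m ∈ P) (ha : a ∈ J) : r * a ∈ P.colon ⊤ :=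
  mem_colon.mpr fun x _ ↦ by
    obtain ⟨c, hc⟩ := mem_span_singleton.mp (hm ▸ smul_mem_smul ha trivial : a • x ∈ span R {m})
    rw [mul_smul, ← hc, smul_comm]
    exact P.smul_mem c hrm

theorem smul_mem_of_mem_smul_top {J : Ideal R} {P : Submodule R M} {s : R} {m : M}
    (hm : m ∈ J • (⊤ : Submodule R M)) (hs : ∀ a ∈ J, s * a ∈ P.colon ⊤) : s • m ∈ P := by
  have hle : J • (⊤ : Submodule R M) ≤ P.comap (s • LinearMap.id) :=
    smul_le.mpr fun a ha n _ ↦ by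
      change s • a • n ∈ P
      rw [← mul_smul]
      exact mem_colon.mp (hs a ha) n trivial
  exact hle hm

end Submodule

open Submodule in
theorem stmt13_general {R M : Type*} [CommRing R] [AddCommGroup M] [Module R M]
    (S : Set R)
    (hmult : ∀ N : Submodule R M, ∃ I : Ideal R, N = I • (⊤ : Submodule R M))
    (P : Submodule R M) (hP : IsSPrimaryIdeal S (P.colon ⊤)) :
    IsSPrimary S P := by
  obtain ⟨hS, s, hsS, hs⟩ := hP
  refine ⟨hS, s, hsS, fun r m hrm ↦ or_iff_not_imp_left.mpr fun hrad ↦ ?_⟩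
  obtain ⟨J, hJ⟩ := hmult (span R {m})
  exact smul_mem_of_mem_smul_top (hJ ▸ mem_span_singleton_self m) fun a ha ↦
    (hs r a (mul_mem_colon_top_of_smul_mem hJ hrm ha)).resolve_left hrad

theorem stmt13 {R M : Type*} [CommRing R] [AddCommGroup M] [Module R M]
    (S : Set R) (hS0 : (0 : R) ∉ S) (hS1 : (1 : R) ∈ S)
    (hSmul : ∀ a ∈ S, ∀ b ∈ S, a * b ∈ S)
    (hmult : ∀ N : Submodule R M, ∃ I : Ideal R, N = I • (⊤ : Submodule R M))
    (P : Submodule R M) (hP : IsSPrimaryIdeal S (P.colon ⊤)) :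
    IsSPrimary S P :=
  stmt13_general S hmult P hP
end

section
/- Let p be an S-primary ideal of R and M a faithful multiplication R-module. Then there exists a fixed s ∈ S such that for all a ∈ R and m ∈ M with a • m ∈ p • M, either s * a ∈ √p or s • m ∈ p • M. -/
/-! Take `s` from the `S`-primary condition on `p` and suppose `a • m ∈ p • M` but
`s * a ∉ √p`. It suffices that the ideal `E = (p • M : s • m)` lies in no maximal ideal `q`.
By the El-Bast–Smith dichotomy, near `q` a multiplication module is either torsion (some
`t ∉ q` kills `s • m`, so `t ∈ E`) or cyclic (`t • M ⊆ R • m₀` for some `t ∉ q`). In the cyclic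
case faithfulness lets us cancel `m₀`: writing `t • m = r • m₀` we get `a * (r * t) ∈ p`, hence
`s * (r * t) ∈ p`, and then `t * t ∈ E`. -/

open Submodule

section MultiplicationModule

variable {R M : Type*} [CommRing R] [AddCommGroup M] [Module R M]

theorem Submodule.eq_colon_univ_smul_top
    (hmult : ∀ N : Submodule R M, ∃ I : Ideal R, N = I • (⊤ : Submodule R M))
    (N : Submodule R M) : N = N.colon Set.univ • (⊤ : Submodule R M) := by
  obtain ⟨I, hI⟩ := hmult N
  refine le_antisymm ?_ (smul_le.2 fun _ hr n _ => mem_colon.1 hr n trivial)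
  calc N = I • ⊤ := hI
    _ ≤ N.colon Set.univ • ⊤ := smul_mono_left fun i hi =>
        mem_colon.2 fun y _ => by rw [hI]; exact smul_mem_smul hi mem_top

theorem Submodule.mem_colon_span_singleton_self_smul_top
    (hmult : ∀ N : Submodule R M, ∃ I : Ideal R, N = I • (⊤ : Submodule R M)) (x : M) :
    x ∈ (span R {x}).colon Set.univ • (⊤ : Submodule R M) :=
  eq_colon_univ_smul_top hmult _ ▸ mem_span_singleton_self x

theorem Submodule.smul_mem_smul_span_singleton_of_mem_colon {I : Ideal R} {t : R} {m₀ x : M}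
    (ht : t ∈ (span R {m₀}).colon Set.univ) (hx : x ∈ I • (⊤ : Submodule R M)) :
    t • x ∈ I • span R {m₀} := by
  refine (smul_le (P := comap (t • LinearMap.id) (I • span R {m₀})).2 fun r hr n _ => ?_) hx
  simp only [mem_comap, LinearMap.smul_apply, LinearMap.id_apply]
  rw [smul_comm]
  exact smul_mem_smul hr (mem_colon.1 ht n trivial)

theorem Submodule.mul_eq_zero_of_mem_colon_of_smul_eq_zero
    (hfaithful : ∀ r : R, (∀ m : M, r • m = 0) → r = 0) {t b : R} {m₀ : M}
    (ht : t ∈ (span R {m₀}).colon Set.univ) (hb : b • m₀ = 0) : b * t = 0 :=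
  hfaithful _ fun y => by
    obtain ⟨r, hr⟩ := mem_span_singleton.1 (mem_colon.1 ht y trivial)
    rw [mul_smul, ← hr, smul_comm, hb, smul_zero]

theorem Submodule.mem_smul_span_singleton_self_of_forall_colon_le
    (hmult : ∀ N : Submodule R M, ∃ I : Ideal R, N = I • (⊤ : Submodule R M)) {q : Ideal R}
    (hq : ∀ y : M, (span R {y}).colon Set.univ ≤ q) (x : M) : x ∈ q • span R {x} := by
  have hmem := mem_colon_span_singleton_self_smul_top hmult
  refine (smul_le.2 fun _ ha n _ => ?_) (hmem x)
  exact smul_mono_left (hq n) (smul_mem_smul_span_singleton_of_mem_colon ha (hmem n))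

theorem Submodule.exists_colon_not_le_or_forall_exists_smul_eq_zero
    (hmult : ∀ N : Submodule R M, ∃ I : Ideal R, N = I • (⊤ : Submodule R M))
    (q : Ideal R) [hq : q.IsMaximal] :
    (∃ m₀ : M, ¬(span R {m₀}).colon Set.univ ≤ q) ∨ ∀ x : M, ∃ t ∉ q, t • x = 0 := by
  refine or_iff_not_imp_left.2 fun h x => ?_
  push Not at h
  obtain ⟨e, he, hex⟩ :=
    mem_smul_span_singleton.1 (mem_smul_span_singleton_self_of_forall_colon_le hmult h x)
  refine ⟨1 - e, fun h1 => hq.ne_top ?_, by rw [sub_smul, one_smul, hex, sub_self]⟩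
  exact (Ideal.eq_top_iff_one _).2 (by simpa using add_mem h1 he)

theorem Submodule.exists_smul_eq_and_mul_mem_of_smul_mem
    (hfaithful : ∀ r : R, (∀ m : M, r • m = 0) → r = 0) {I : Ideal R} {t : R} {m₀ : M}
    (ht : t ∈ (span R {m₀}).colon Set.univ) {a : R} {m : M}
    (ham : a • m ∈ I • (⊤ : Submodule R M)) :
    ∃ r : R, t • m = r • m₀ ∧ a * (r * t) ∈ I := by
  obtain ⟨r, hr⟩ := mem_span_singleton.1 (mem_colon.1 ht m trivial)
  obtain ⟨c, hc, hct⟩ :=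
    mem_smul_span_singleton.1 (smul_mem_smul_span_singleton_of_mem_colon ht ham)
  have hcancel : (a * r - c) * t = 0 :=
    mul_eq_zero_of_mem_colon_of_smul_eq_zero hfaithful ht
      (by rw [sub_smul, mul_smul, hr, hct, smul_comm, sub_self])
  refine ⟨r, hr.symm, ?_⟩
  rw [show a * (r * t) = c * t by linear_combination hcancel]
  exact I.mul_mem_right t hc

end MultiplicationModule

theorem stmt14_general {R M : Type*} [CommRing R] [AddCommGroup M] [Module R M]
    (S : Set R)
    (hfaithful : ∀ r : R, (∀ m : M, r • m = 0) → r = 0)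
    (hmult : ∀ N : Submodule R M, ∃ I : Ideal R, N = I • (⊤ : Submodule R M))
    (p : Ideal R) (hp : IsSPrimaryIdeal S p) :
    ∃ s ∈ S, ∀ (a : R) (m : M), a • m ∈ p • (⊤ : Submodule R M) →
      s * a ∈ p.radical ∨ s • m ∈ p • (⊤ : Submodule R M) := by
  obtain ⟨-, s, hsS, hs⟩ := hp
  refine ⟨s, hsS, fun a m ham => or_iff_not_imp_left.2 fun hsa => ?_⟩
  set E := (p • (⊤ : Submodule R M)).colon {s • m}
  suffices E = ⊤ by simpa [E] using this
  by_contra hE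
  obtain ⟨q, hq, hEq⟩ := Ideal.exists_le_maximal E hE
  rcases exists_colon_not_le_or_forall_exists_smul_eq_zero hmult q with ⟨m₀, hm₀⟩ | htorsion
  · obtain ⟨t, ht, htq⟩ := SetLike.not_le_iff_exists.1 hm₀
    obtain ⟨r, hr, har⟩ := exists_smul_eq_and_mul_mem_of_smul_mem hfaithful ht ham
    refine (hs a (r * t) har).elim hsa fun hsrt => htq ?_
    have htt : t * t ∈ E := by
      rw [mem_colon_singleton, mul_smul, smul_comm t s m, hr, smul_smul, smul_smul]
      exact smul_mem_smul (by convert hsrt using 1; ring) mem_top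
    exact (hq.isPrime.mem_or_mem (hEq htt)).elim id id
  · obtain ⟨t, htq, ht⟩ := htorsion (s • m)
    exact htq (hEq (mem_colon_singleton.2 (ht ▸ zero_mem _)))

theorem stmt14 {R M : Type*} [CommRing R] [AddCommGroup M] [Module R M]
    (S : Set R) (hS0 : (0 : R) ∉ S) (hS1 : (1 : R) ∈ S)
    (hSmul : ∀ a ∈ S, ∀ b ∈ S, a * b ∈ S)
    (hfaithful : ∀ r : R, (∀ m : M, r • m = 0) → r = 0)
    (hmult : ∀ N : Submodule R M, ∃ I : Ideal R, N = I • (⊤ : Submodule R M))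
    (p : Ideal R) (hp : IsSPrimaryIdeal S p) :
    ∃ s ∈ S, ∀ (a : R) (m : M), a • m ∈ p • (⊤ : Submodule R M) →
      s * a ∈ p.radical ∨ s • m ∈ p • (⊤ : Submodule R M) :=
  stmt14_general S hfaithful hmult p hp
end

section
/- Let R = R₁ × R₂, S = S₁ × S₂ with S_i multiplicatively closed in R_i, and let p = p₁ × p₂ be an ideal of R. Then p is an S-primary ideal of R if and only if either (p₁ is an S₁-primary ideal of R₁ and p₂ ∩ S₂ ≠ ∅) or (p₂ is an S₂-primary ideal of R₂ and p₁ ∩ S₁ ≠ ∅). -/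
/-!
Testing the `S`-primary condition on `(1, 0) * (0, 1) = 0` with the witness `s = (s₁, s₂)`
gives `s₁ ∈ √p₁` or `s₂ ∈ p₂`; as `S₁` is closed under multiplication, either way one factor
meets its multiplicative set. If `p₂` meets `S₂`, the condition on `p₁.prod p₂` only tests the
first coordinate, so it is equivalent to `p₁` being `S₁`-primary. The other case follows by
swapping the factors.
-/

theorem Ideal.mem_radical_prod {R₁ R₂ : Type*} [CommRing R₁] [CommRing R₂]
    {p₁ : Ideal R₁} {p₂ : Ideal R₂} {x : R₁ × R₂} :
    x ∈ (p₁.prod p₂).radical ↔ x.1 ∈ p₁.radical ∧ x.2 ∈ p₂.radical := by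
  constructor
  · rintro ⟨n, hn⟩
    exact ⟨⟨n, hn.1⟩, ⟨n, hn.2⟩⟩
  · rintro ⟨⟨n, hn⟩, ⟨m, hm⟩⟩
    refine ⟨n + m, ?_, ?_⟩
    · simpa [pow_add] using p₁.mul_mem_right (x.1 ^ m) hn
    · simpa [pow_add] using p₂.mul_mem_left (x.2 ^ n) hm

theorem Ideal.inter_nonempty_of_mem_radical {A : Type*} [CommRing A] {S : Set A} {I : Ideal A}
    (hS : ∀ a ∈ S, ∀ b ∈ S, a * b ∈ S) {s : A} (hs : s ∈ S) (hsI : s ∈ I.radical) :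
    (↑I ∩ S : Set A).Nonempty := by
  obtain ⟨n, hn⟩ := hsI
  have hpow : ∀ k : ℕ, s ^ (k + 1) ∈ S := by
    intro k
    induction k with
    | zero => simpa using hs
    | succ k ih => simpa [pow_succ] using hS _ ih _ hs
  exact ⟨s ^ (n + 1), by simpa [pow_succ] using I.mul_mem_right s hn, hpow n⟩

section Prod

variable {R₁ R₂ : Type*} [CommRing R₁] [CommRing R₂] {S₁ : Set R₁} {S₂ : Set R₂}
  {p₁ : Ideal R₁} {p₂ : Ideal R₂}

theorem IsSPrimaryIdeal.prod_swap (h : IsSPrimaryIdeal (S₁ ×ˢ S₂) (p₁.prod p₂)) :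
    IsSPrimaryIdeal (S₂ ×ˢ S₁) (p₂.prod p₁) := by
  obtain ⟨hdisj, s, hs, hprim⟩ := h
  refine ⟨fun t ht htp => hdisj t.swap ⟨ht.2, ht.1⟩ ⟨htp.2, htp.1⟩, s.swap, ⟨hs.2, hs.1⟩, ?_⟩
  intro x y hxy
  rcases hprim x.swap y.swap ⟨hxy.2, hxy.1⟩ with hx | hy
  · rw [Ideal.mem_radical_prod] at hx
    exact Or.inl (Ideal.mem_radical_prod.2 ⟨hx.2, hx.1⟩)
  · exact Or.inr ⟨hy.2, hy.1⟩

theorem IsSPrimaryIdeal.prod_of_inter_nonempty (h : IsSPrimaryIdeal S₁ p₁)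
    (hp₂ : (↑p₂ ∩ S₂ : Set R₂).Nonempty) : IsSPrimaryIdeal (S₁ ×ˢ S₂) (p₁.prod p₂) := by
  obtain ⟨hdisj, s₁, hs₁, hprim⟩ := h
  obtain ⟨t₂, ht₂p, ht₂S⟩ := hp₂
  refine ⟨fun t ht htp => hdisj t.1 ht.1 htp.1, (s₁, t₂), ⟨hs₁, ht₂S⟩, ?_⟩
  intro x y hxy
  rcases hprim x.1 y.1 hxy.1 with hx | hy
  · exact Or.inl (Ideal.mem_radical_prod.2 ⟨hx, Ideal.le_radical (p₂.mul_mem_right _ ht₂p)⟩)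
  · exact Or.inr ⟨hy, p₂.mul_mem_right _ ht₂p⟩

theorem IsSPrimaryIdeal.of_prod_of_inter_nonempty (h : IsSPrimaryIdeal (S₁ ×ˢ S₂) (p₁.prod p₂))
    (hp₂ : (↑p₂ ∩ S₂ : Set R₂).Nonempty) : IsSPrimaryIdeal S₁ p₁ := by
  obtain ⟨hdisj, s, hs, hprim⟩ := h
  obtain ⟨t₂, ht₂p, ht₂S⟩ := hp₂
  refine ⟨fun t ht htp => hdisj (t, t₂) ⟨ht, ht₂S⟩ ⟨htp, ht₂p⟩, s.1, hs.1, ?_⟩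
  intro x y hxy
  rcases hprim (x, 0) (y, 0) ⟨hxy, by simp⟩ with hx | hy
  · exact Or.inl (Ideal.mem_radical_prod.1 hx).1
  · exact Or.inr hy.1

theorem IsSPrimaryIdeal.prod_inter_nonempty (hS₁ : ∀ a ∈ S₁, ∀ b ∈ S₁, a * b ∈ S₁)
    (h : IsSPrimaryIdeal (S₁ ×ˢ S₂) (p₁.prod p₂)) :
    (↑p₁ ∩ S₁ : Set R₁).Nonempty ∨ (↑p₂ ∩ S₂ : Set R₂).Nonempty := by
  obtain ⟨-, s, hs, hprim⟩ := h
  rcases hprim (1, 0) (0, 1) (by simp) with hx | hy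
  · have hs₁ : s.1 ∈ p₁.radical := by simpa using (Ideal.mem_radical_prod.1 hx).1
    exact Or.inl (Ideal.inter_nonempty_of_mem_radical hS₁ hs.1 hs₁)
  · exact Or.inr ⟨s.2, by simpa using hy.2, hs.2⟩

end Prod

theorem stmt15_general {R₁ R₂ : Type*} [CommRing R₁] [CommRing R₂]
    (S₁ : Set R₁) (S₂ : Set R₂)
    (hS₁mul : ∀ a ∈ S₁, ∀ b ∈ S₁, a * b ∈ S₁)
    (p₁ : Ideal R₁) (p₂ : Ideal R₂) :
    IsSPrimaryIdeal (S₁ ×ˢ S₂) (p₁.prod p₂) ↔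
      (IsSPrimaryIdeal S₁ p₁ ∧ (↑p₂ ∩ S₂ : Set R₂).Nonempty) ∨
      (IsSPrimaryIdeal S₂ p₂ ∧ (↑p₁ ∩ S₁ : Set R₁).Nonempty) := by
  constructor
  · intro h
    rcases h.prod_inter_nonempty hS₁mul with hp₁ | hp₂
    · exact Or.inr ⟨h.prod_swap.of_prod_of_inter_nonempty hp₁, hp₁⟩
    · exact Or.inl ⟨h.of_prod_of_inter_nonempty hp₂, hp₂⟩
  · rintro (⟨h, hp₂⟩ | ⟨h, hp₁⟩)
    · exact h.prod_of_inter_nonempty hp₂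
    · exact (h.prod_of_inter_nonempty hp₁).prod_swap

theorem stmt15 {R₁ R₂ : Type*} [CommRing R₁] [CommRing R₂]
    (S₁ : Set R₁) (S₂ : Set R₂)
    (hS₁0 : (0 : R₁) ∉ S₁) (hS₁1 : (1 : R₁) ∈ S₁) (hS₁mul : ∀ a ∈ S₁, ∀ b ∈ S₁, a * b ∈ S₁)
    (hS₂0 : (0 : R₂) ∉ S₂) (hS₂1 : (1 : R₂) ∈ S₂) (hS₂mul : ∀ a ∈ S₂, ∀ b ∈ S₂, a * b ∈ S₂)
    (p₁ : Ideal R₁) (p₂ : Ideal R₂) :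
    IsSPrimaryIdeal (S₁ ×ˢ S₂) (p₁.prod p₂) ↔
      (IsSPrimaryIdeal S₁ p₁ ∧ (↑p₂ ∩ S₂ : Set R₂).Nonempty) ∨
      (IsSPrimaryIdeal S₂ p₂ ∧ (↑p₁ ∩ S₁ : Set R₁).Nonempty) :=
  stmt15_general S₁ S₂ hS₁mul p₁ p₂
end

section
/- Let M = M₁ × M₂ be an R₁ × R₂-module, S = S₁ × S₂ a multiplicatively closed subset, and P = P₁ × P₂ a submodule of M. Then P is an S-primary submodule of M if and only if either (P₁ is an S₁-primary submodule of M₁ and (P₂ : M₂) ∩ S₂ ≠ ∅) or (P₂ is an S₂-primary submodule of M₂ and (P₁ : M₁) ∩ S₁ ≠ ∅). -/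
section Prod

variable {R₁ R₂ M₁ M₂ : Type*} [CommRing R₁] [CommRing R₂]
  [AddCommGroup M₁] [AddCommGroup M₂] [Module R₁ M₁] [Module R₂ M₂]

/-- `M₁` as a module over `R₁ × R₂`, acting through the first projection. -/
instance instFst : Module (R₁ × R₂) M₁ := Module.compHom M₁ (RingHom.fst R₁ R₂)

/-- `M₂` as a module over `R₁ × R₂`, acting through the second projection. -/
instance instSnd : Module (R₁ × R₂) M₂ := Module.compHom M₂ (RingHom.snd R₁ R₂)

/-- A submodule `P₁` of the `R₁`-module `M₁`, viewed as an `R₁ × R₂`-submodule. -/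
def liftFst (P₁ : Submodule R₁ M₁) : Submodule (R₁ × R₂) M₁ where
  carrier := P₁
  add_mem' := fun h h' => P₁.add_mem h h'
  zero_mem' := P₁.zero_mem
  smul_mem' := fun r m hm => P₁.smul_mem r.1 hm

/-- A submodule `P₂` of the `R₂`-module `M₂`, viewed as an `R₁ × R₂`-submodule. -/
def liftSnd (P₂ : Submodule R₂ M₂) : Submodule (R₁ × R₂) M₂ where
  carrier := P₂
  add_mem' := fun h h' => P₂.add_mem h h'
  zero_mem' := P₂.zero_mem
  smul_mem' := fun r m hm => P₂.smul_mem r.2 hm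

theorem Ideal.radical_prod {R S : Type*} [CommSemiring R] [CommSemiring S]
    (I : Ideal R) (J : Ideal S) : (I.prod J).radical = I.radical.prod J.radical := by
  ext x
  simp only [Ideal.mem_radical_iff, Ideal.mem_prod _ _, Prod.pow_fst, Prod.pow_snd]
  constructor
  · rintro ⟨n, hI, hJ⟩
    exact ⟨⟨n, hI⟩, ⟨n, hJ⟩⟩
  · rintro ⟨⟨n, hI⟩, ⟨k, hJ⟩⟩
    refine ⟨n + k, ?_, ?_⟩
    · rw [pow_add]
      exact I.mul_mem_right _ hI
    · rw [pow_add]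
      exact J.mul_mem_left _ hJ

theorem colon_liftFst_prod_liftSnd (P₁ : Submodule R₁ M₁) (P₂ : Submodule R₂ M₂) :
    ((liftFst P₁).prod (liftSnd P₂)).colon ⊤ = (P₁.colon ⊤).prod (P₂.colon ⊤) := by
  ext r
  simp only [Submodule.mem_colon, Ideal.mem_prod _ _, Set.top_eq_univ, Set.mem_univ, true_implies]
  constructor
  · intro h
    exact ⟨fun m => (h (m, 0)).1, fun m => (h (0, m)).2⟩
  · rintro ⟨h₁, h₂⟩ m
    exact ⟨h₁ m.1, h₂ m.2⟩

section IsSPrimary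

variable {S₁ : Set R₁} {S₂ : Set R₂} {P₁ : Submodule R₁ M₁} {P₂ : Submodule R₂ M₂}

theorem IsSPrimary.prod_of_fst (h : IsSPrimary S₁ P₁)
    (ht : (↑(P₂.colon ⊤) ∩ S₂ : Set R₂).Nonempty) :
    IsSPrimary (S₁ ×ˢ S₂) ((liftFst P₁).prod (liftSnd P₂)) := by
  obtain ⟨hdisj, s, hs, hprim⟩ := h
  obtain ⟨t, htP, htS⟩ := ht
  rw [IsSPrimary, colon_liftFst_prod_liftSnd, Ideal.radical_prod]
  refine ⟨fun u hu huP => hdisj u.1 hu.1 huP.1, (s, t), ⟨hs, htS⟩, fun r m hrm => ?_⟩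
  rcases hprim r.1 m.1 hrm.1 with hr | hm
  · exact Or.inl ⟨hr, Ideal.le_radical (Ideal.mul_mem_right _ _ htP)⟩
  · exact Or.inr ⟨hm, Submodule.mem_colon.1 htP m.2 trivial⟩

theorem IsSPrimary.prod_of_snd (h : IsSPrimary S₂ P₂)
    (ht : (↑(P₁.colon ⊤) ∩ S₁ : Set R₁).Nonempty) :
    IsSPrimary (S₁ ×ˢ S₂) ((liftFst P₁).prod (liftSnd P₂)) := by
  obtain ⟨hdisj, s, hs, hprim⟩ := h
  obtain ⟨t, htP, htS⟩ := ht
  rw [IsSPrimary, colon_liftFst_prod_liftSnd, Ideal.radical_prod]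
  refine ⟨fun u hu huP => hdisj u.2 hu.2 huP.2, (t, s), ⟨htS, hs⟩, fun r m hrm => ?_⟩
  rcases hprim r.2 m.2 hrm.2 with hr | hm
  · exact Or.inl ⟨Ideal.le_radical (Ideal.mul_mem_right _ _ htP), hr⟩
  · exact Or.inr ⟨Submodule.mem_colon.1 htP m.1 trivial, hm⟩

theorem IsSPrimary.fst_of_prod (h : IsSPrimary (S₁ ×ˢ S₂) ((liftFst P₁).prod (liftSnd P₂)))
    (ht : (↑(P₂.colon ⊤) ∩ S₂ : Set R₂).Nonempty) : IsSPrimary S₁ P₁ := by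
  obtain ⟨hdisj, s, hs, hprim⟩ := h
  obtain ⟨t, htP, htS⟩ := ht
  rw [colon_liftFst_prod_liftSnd, Ideal.radical_prod] at *
  refine ⟨fun u hu huP => hdisj (u, t) ⟨hu, htS⟩ ⟨huP, htP⟩, s.1, hs.1, fun r m hrm => ?_⟩
  rcases hprim (r, 1) (m, 0) ⟨hrm, by simp⟩ with hr | hm
  · exact Or.inl hr.1
  · exact Or.inr hm.1

theorem IsSPrimary.snd_of_prod (h : IsSPrimary (S₁ ×ˢ S₂) ((liftFst P₁).prod (liftSnd P₂)))
    (ht : (↑(P₁.colon ⊤) ∩ S₁ : Set R₁).Nonempty) : IsSPrimary S₂ P₂ := by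
  obtain ⟨hdisj, s, hs, hprim⟩ := h
  obtain ⟨t, htP, htS⟩ := ht
  rw [colon_liftFst_prod_liftSnd, Ideal.radical_prod] at *
  refine ⟨fun u hu huP => hdisj (t, u) ⟨htS, hu⟩ ⟨htP, huP⟩, s.2, hs.2, fun r m hrm => ?_⟩
  rcases hprim (1, r) (0, m) ⟨by simp, hrm⟩ with hr | hm
  · exact Or.inl hr.2
  · exact Or.inr hm.2

theorem IsSPrimary.colon_inter_nonempty_of_prod (hS₂1 : (1 : R₂) ∈ S₂)
    (hS₂mul : ∀ a ∈ S₂, ∀ b ∈ S₂, a * b ∈ S₂)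
    (h : IsSPrimary (S₁ ×ˢ S₂) ((liftFst P₁).prod (liftSnd P₂))) :
    (↑(P₂.colon ⊤) ∩ S₂ : Set R₂).Nonempty ∨ (↑(P₁.colon ⊤) ∩ S₁ : Set R₁).Nonempty := by
  obtain ⟨-, s, hs, hprim⟩ := h
  rw [colon_liftFst_prod_liftSnd, Ideal.radical_prod] at hprim
  by_cases hrad : s.2 ∈ (P₂.colon ⊤).radical
  · obtain ⟨n, hn⟩ := hrad
    let T₂ : Submonoid R₂ := ⟨⟨S₂, fun ha hb => hS₂mul _ ha _ hb⟩, hS₂1⟩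
    exact Or.inl ⟨s.2 ^ n, hn, T₂.pow_mem hs.2 n⟩
  · refine Or.inr ⟨s.1, Submodule.mem_colon.2 fun m _ => ?_, hs.1⟩
    rcases hprim (0, 1) (m, 0) ⟨show (0 : R₁) • m ∈ P₁ by simp, by simp⟩ with hr | hm
    · exact absurd (by simpa using hr.2) hrad
    · exact hm.1

end IsSPrimary

theorem stmt16_general (S₁ : Set R₁) (S₂ : Set R₂)
    (hS₂1 : (1 : R₂) ∈ S₂) (hS₂mul : ∀ a ∈ S₂, ∀ b ∈ S₂, a * b ∈ S₂)
    (P₁ : Submodule R₁ M₁) (P₂ : Submodule R₂ M₂) :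
    IsSPrimary (S₁ ×ˢ S₂) ((liftFst P₁).prod (liftSnd P₂)) ↔
      (IsSPrimary S₁ P₁ ∧ (↑(P₂.colon ⊤) ∩ S₂ : Set R₂).Nonempty) ∨
      (IsSPrimary S₂ P₂ ∧ (↑(P₁.colon ⊤) ∩ S₁ : Set R₁).Nonempty) := by
  constructor
  · intro h
    rcases h.colon_inter_nonempty_of_prod hS₂1 hS₂mul with ht | ht
    · exact Or.inl ⟨h.fst_of_prod ht, ht⟩
    · exact Or.inr ⟨h.snd_of_prod ht, ht⟩
  · rintro (⟨h, ht⟩ | ⟨h, ht⟩)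
    · exact h.prod_of_fst ht
    · exact h.prod_of_snd ht

theorem stmt16 (S₁ : Set R₁) (S₂ : Set R₂)
    (hS₁0 : (0 : R₁) ∉ S₁) (hS₁1 : (1 : R₁) ∈ S₁) (hS₁mul : ∀ a ∈ S₁, ∀ b ∈ S₁, a * b ∈ S₁)
    (hS₂0 : (0 : R₂) ∉ S₂) (hS₂1 : (1 : R₂) ∈ S₂) (hS₂mul : ∀ a ∈ S₂, ∀ b ∈ S₂, a * b ∈ S₂)
    (P₁ : Submodule R₁ M₁) (P₂ : Submodule R₂ M₂) :
    IsSPrimary (S₁ ×ˢ S₂) ((liftFst P₁).prod (liftSnd P₂)) ↔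
      (IsSPrimary S₁ P₁ ∧ (↑(P₂.colon ⊤) ∩ S₂ : Set R₂).Nonempty) ∨
      (IsSPrimary S₂ P₂ ∧ (↑(P₁.colon ⊤) ∩ S₁ : Set R₁).Nonempty) :=
  stmt16_general S₁ S₂ hS₂1 hS₂mul P₁ P₂

end Prod
end

section
/- Let P be an S-primary submodule of an R-module M. Then there exists s ∈ S such that for all s' ∈ S, (P :_M s') ⊆ (P :_M s), where (P :_M t) = {m ∈ M | t • m ∈ P}. -/
theorem pow_succ_mem_of_mul_mem {R : Type*} [Monoid R] {S : Set R}
    (hSmul : ∀ a ∈ S, ∀ b ∈ S, a * b ∈ S) {x : R} (hx : x ∈ S) (n : ℕ) :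
    x ^ (n + 1) ∈ S := by
  induction n with
  | zero => simpa using hx
  | succ n ih => rw [pow_succ]; exact hSmul _ ih _ hx

theorem Ideal.notMem_radical_of_mul_mem {R : Type*} [CommSemiring R] {S : Set R}
    (hSmul : ∀ a ∈ S, ∀ b ∈ S, a * b ∈ S) {I : Ideal R} (hdisj : ∀ s ∈ S, s ∉ I)
    {x : R} (hx : x ∈ S) : x ∉ I.radical := by
  rintro ⟨n, hn⟩
  -- `x ^ n ∈ I` could have `n = 0`; pass to `x ^ (n + 1)`, which lies in `S`.
  refine hdisj _ (pow_succ_mem_of_mul_mem hSmul hx n) ?_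
  rw [pow_succ]
  exact I.mul_mem_right x hn

theorem stmt17_general {R M : Type*} [CommRing R] [AddCommGroup M] [Module R M]
    (S : Set R)
    (hSmul : ∀ a ∈ S, ∀ b ∈ S, a * b ∈ S)
    (P : Submodule R M) (hP : IsSPrimary S P) :
    ∃ s ∈ S, ∀ s' ∈ S, ∀ m : M, s' • m ∈ P → s • m ∈ P := by
  obtain ⟨hdisj, s, hs, hprim⟩ := hP
  refine ⟨s, hs, fun s' hs' m hm => ?_⟩
  rcases hprim s' m hm with hrad | hsm
  · exact absurd hrad (Ideal.notMem_radical_of_mul_mem hSmul hdisj (hSmul s hs s' hs'))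
  · exact hsm

theorem stmt17 {R M : Type*} [CommRing R] [AddCommGroup M] [Module R M]
    (S : Set R) (hS0 : (0 : R) ∉ S) (hS1 : (1 : R) ∈ S)
    (hSmul : ∀ a ∈ S, ∀ b ∈ S, a * b ∈ S)
    (P : Submodule R M) (hP : IsSPrimary S P) :
    ∃ s ∈ S, ∀ s' ∈ S, ∀ m : M, s' • m ∈ P → s • m ∈ P :=
  stmt17_general S hSmul P hP
end

section
/- Let M be a module over an integral domain R. Then M is torsion-free if and only if for every maximal ideal 𝔪 of R, M is quasi (R \ 𝔪)-torsion-free, i.e., there exists s ∉ 𝔪 such that for all r ∈ R and m ∈ M with r • m = 0, either s • m = 0 or (s * r)^t = 0 for some t ∈ ℕ. -/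
/-!
A torsion-free module is quasi `S`-torsion-free with witness `s = 1`. Conversely, over a domain
`s * r` is nilpotent only when `s * r = 0`, so for `r ≠ 0` and `r • m = 0` each maximal ideal `𝔪`
supplies some `s ∉ 𝔪` killing `m`; the annihilator of `m` then lies in no maximal ideal, hence
contains `1`, and `m = 0`.
-/

namespace Module

variable (R M : Type*) [CommRing R] [AddCommGroup M] [Module R M]

def IsQuasiTorsionFree (S : Submonoid R) : Prop :=
  ∃ s ∈ S, ∀ (r : R) (m : M), r • m = 0 → s • m = 0 ∨ IsNilpotent (s * r)

variable {R M}

theorem isQuasiTorsionFree_of_noZeroSMulDivisors [NoZeroSMulDivisors R M] (S : Submonoid R) :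
    IsQuasiTorsionFree R M S :=
  ⟨1, S.one_mem, fun r m hrm => (eq_zero_or_eq_zero_of_smul_eq_zero hrm).elim
    (fun hr => Or.inr (by simp [hr])) (fun hm => Or.inl (by simp [hm]))⟩

theorem IsQuasiTorsionFree.exists_smul_eq_zero [IsDomain R] {S : Submonoid R}
    (h : IsQuasiTorsionFree R M S) (hS : (0 : R) ∉ S) {r : R} {m : M} (hr : r ≠ 0)
    (hrm : r • m = 0) : ∃ s ∈ S, s • m = 0 := by
  obtain ⟨s, hs, hsS⟩ := h
  refine ⟨s, hs, (hsS r m hrm).resolve_right ?_⟩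
  rw [isNilpotent_iff_eq_zero]
  exact mul_ne_zero (ne_of_mem_of_not_mem hs hS) hr

theorem eq_zero_of_forall_isMaximal_exists_smul_eq_zero {m : M}
    (h : ∀ 𝔪 : Ideal R, 𝔪.IsMaximal → ∃ s ∉ 𝔪, s • m = 0) : m = 0 := by
  rw [← Ideal.torsionOf_eq_top_iff (R := R)]
  by_contra hne
  obtain ⟨𝔪, h𝔪, hle⟩ := Ideal.exists_le_maximal _ hne
  obtain ⟨s, hs, hsm⟩ := h 𝔪 h𝔪
  exact hs (hle ((Ideal.mem_torsionOf_iff m s).2 hsm))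

theorem isQuasiTorsionFree_primeCompl_iff (𝔪 : Ideal R) [𝔪.IsPrime] :
    IsQuasiTorsionFree R M 𝔪.primeCompl ↔
      ∃ s ∉ 𝔪, ∀ (r : R) (m : M), r • m = 0 → s • m = 0 ∨ ∃ t : ℕ, (s * r) ^ t = 0 :=
  Iff.rfl

end Module

open Module in
theorem stmt19 {R M : Type*} [CommRing R] [IsDomain R] [AddCommGroup M] [Module R M] :
    (∀ (r : R) (m : M), r • m = 0 → r = 0 ∨ m = 0) ↔
      ∀ 𝔪 : Ideal R, 𝔪.IsMaximal →
        ∃ s ∉ 𝔪, ∀ (r : R) (m : M), r • m = 0 → s • m = 0 ∨ ∃ t : ℕ, (s * r) ^ t = 0 := by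
  constructor
  · intro h 𝔪 _
    have : NoZeroSMulDivisors R M := ⟨h _ _⟩
    exact (isQuasiTorsionFree_primeCompl_iff 𝔪).1 (isQuasiTorsionFree_of_noZeroSMulDivisors _)
  · intro h r m hrm
    refine or_iff_not_imp_left.2 fun hr =>
      eq_zero_of_forall_isMaximal_exists_smul_eq_zero fun (𝔪 : Ideal R) h𝔪 => ?_
    have zero_notMem : (0 : R) ∉ 𝔪.primeCompl := fun h0 => h0 𝔪.zero_mem
    exact ((isQuasiTorsionFree_primeCompl_iff 𝔪).2 (h 𝔪 h𝔪)).exists_smul_eq_zero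
      zero_notMem hr hrm
end
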